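/- arXiv:2106.11356 — 3 statements merged into one kernel-verified Lean document; each statement's English description precedes it below -/
import Mathlib

section
/- For all natural numbers d, g and every nonzero real (or rational) number N, the coefficient of q^d in the formal power series (1+q)^{d−g} · (1 + ((N−1)/N)·q)^g equals the partial sum Σ_{i=0}^{d} C(g, i) · (−N)^{−i}. Equivalently, this coefficient equals the coefficient of q^d in (1 − q/N)^g · (1 − q)^{−1}. -/
/-!
Put `b = -1/N`, so that `1 + ((N-1)/N) q = (1 + q) + b q`. Expanding the `g`-th power,
`(1+q)^{d-g} (1 + ((N-1)/N) q)^g = ∑ₖ C(g,k) bᵏ qᵏ (1+q)^{d-k}`, and the coefficient of `q^d` in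
`qᵏ (1+q)^{d-k}` is `1` for `k ≤ d` and `0` otherwise, exactly as in `qᵏ (1-q)⁻¹`. Hence the
coefficient agrees with that of `(1 + b q)^g (1-q)⁻¹`, which is the partial sum
`∑_{i ≤ d} C(g,i) bⁱ` of the coefficients of `(1 + b q)^g`.
-/

open PowerSeries Finset

/-- Generalized binomial coefficient C(z, k) for an integer z, as a rational number. -/
noncomputable def genChoose (z : ℤ) (k : ℕ) : ℚ :=
  (∏ i ∈ Finset.range k, ((z : ℚ) - (i : ℚ))) / (k.factorial : ℚ)

theorem genChoose_eq_choose (z : ℤ) (k : ℕ) : genChoose z k = Ring.choose (z : ℚ) k := by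
  rw [Ring.choose_eq_smul, ← Polynomial.aeval_eq_smeval, Polynomial.aeval_def,
    Polynomial.eval₂_eq_eval_map, descPochhammer_map, descPochhammer_eval_eq_prod_range,
    genChoose, smul_eq_mul, div_eq_inv_mul]

namespace PowerSeries

section CommRing

variable {R : Type*} [CommRing R]

theorem coeff_mul_mk_one (f : R⟦X⟧) (d : ℕ) :
    coeff d (f * mk fun _ => 1) = ∑ i ∈ range (d + 1), coeff i f := by
  simp only [coeff_mul, coeff_mk, mul_one]
  exact Nat.sum_antidiagonal_eq_sum_range_succ (fun i _ => coeff i f) d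

theorem coeff_one_add_X_pow (g i : ℕ) : coeff i ((1 + X : R⟦X⟧) ^ g) = g.choose i := by
  rw [show (1 + X : R⟦X⟧) ^ g = ((1 + Polynomial.X : Polynomial R) ^ g : Polynomial R) by simp,
    Polynomial.coeff_coe, Polynomial.coeff_one_add_X_pow]

theorem coeff_one_add_C_mul_X_pow (b : R) (g i : ℕ) :
    coeff i ((1 + C b * X) ^ g) = g.choose i * b ^ i := by
  have : (1 + C b * X : R⟦X⟧) ^ g = rescale b ((1 + X) ^ g) := by simp [rescale_X]
  rw [this, coeff_rescale, coeff_one_add_X_pow, mul_comm]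

end CommRing

section BinomialRing

variable {R : Type*} [CommRing R] [BinomialRing R]

theorem coeff_X_pow_mul_binomialSeries_sub (d k : ℕ) :
    coeff d (X ^ k * binomialSeries R ((d : R) - k)) = coeff d (X ^ k * mk fun _ => (1 : R)) := by
  rw [coeff_X_pow_mul', coeff_X_pow_mul']
  split_ifs with hk
  · rw [binomialSeries_coeff, coeff_mk, ← Nat.cast_sub hk, Ring.choose_natCast, Nat.choose_self,
      Nat.cast_one, one_smul]
  · rfl

theorem coeff_binomialSeries_mul_pow (d g : ℕ) (b : R) :
    coeff d (binomialSeries R ((d : R) - g) * (1 + C (1 + b) * X) ^ g) =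
      coeff d ((1 + C b * X) ^ g * mk fun _ => 1) := by
  rw [map_add, map_one, show (1 + (1 + C b) * X : R⟦X⟧) = C b * X + (1 + X) by ring,
    add_comm 1 (C b * X), add_pow, add_pow, mul_sum, sum_mul, map_sum, map_sum]
  refine sum_congr rfl fun k hk => ?_
  have hkg : k ≤ g := Nat.lt_succ_iff.mp (mem_range.mp hk)
  rw [← binomialSeries_nat (R := R), one_pow, mul_one, ← map_natCast (C (R := R))]
  calc coeff d (binomialSeries R ((d : R) - g) *
        ((C b * X) ^ k * binomialSeries R ((g - k : ℕ) : R) * C (g.choose k : R)))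
      = coeff d (C (b ^ k * g.choose k) * (X ^ k * binomialSeries R ((d : R) - k))) := by
        congr 1
        rw [Nat.cast_sub hkg, show (d : R) - k = (d - g) + (g - k) by ring, binomialSeries_add,
          map_mul, map_pow]
        ring
    _ = coeff d ((C b * X) ^ k * C (g.choose k : R) * mk fun _ => 1) := by
        rw [coeff_C_mul, coeff_X_pow_mul_binomialSeries_sub, ← coeff_C_mul]
        congr 1
        rw [mul_pow, map_mul, map_pow]
        ring

end BinomialRing

end PowerSeries

/-- for d, g : ℕ and N ≠ 0, the coefficient of q^d in
(1+q)^{d−g} · (1 + ((N−1)/N) q)^g equals Σ_{i=0}^d C(g,i)(−N)^{−i}, and also equals the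
coefficient of q^d in (1 − q/N)^g (1 − q)^{−1}. -/
theorem stmt_4 (d g : ℕ) (N : ℚ) (hN : N ≠ 0) :
    (PowerSeries.coeff (R := ℚ) d
        (PowerSeries.mk (fun k => genChoose ((d : ℤ) - (g : ℤ)) k) *
          (1 + PowerSeries.C (R := ℚ) ((N - 1) / N) * PowerSeries.X) ^ g) =
      ∑ i ∈ Finset.range (d + 1), (g.choose i : ℚ) * ((-N)⁻¹) ^ i) ∧
    (PowerSeries.coeff (R := ℚ) d
        (PowerSeries.mk (fun k => genChoose ((d : ℤ) - (g : ℤ)) k) *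
          (1 + PowerSeries.C (R := ℚ) ((N - 1) / N) * PowerSeries.X) ^ g) =
      PowerSeries.coeff (R := ℚ) d
        ((1 - PowerSeries.C (R := ℚ) N⁻¹ * PowerSeries.X) ^ g *
          PowerSeries.mk (fun _ => (1 : ℚ)))) := by
  have hseries : PowerSeries.mk (fun k => genChoose ((d : ℤ) - (g : ℤ)) k) =
      PowerSeries.binomialSeries ℚ ((d : ℚ) - g) := by
    ext k
    rw [coeff_mk, binomialSeries_coeff, genChoose_eq_choose, smul_eq_mul, mul_one]
    push_cast
    rfl
  have hfactor : (N - 1) / N = 1 + (-N)⁻¹ := by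
    field_simp
    ring
  have hsub : (1 - C N⁻¹ * X : ℚ⟦X⟧) = 1 + C (-N)⁻¹ * X := by
    rw [inv_neg, map_neg, neg_mul, sub_eq_add_neg]
  have hcoeff := coeff_binomialSeries_mul_pow d g (-N)⁻¹
  rw [← hfactor, ← hseries, ← hsub] at hcoeff
  refine ⟨?_, hcoeff⟩
  rw [hcoeff, hsub, coeff_mul_mk_one]
  simp only [coeff_one_add_C_mul_X_pow]
end

section
/- Let g ≥ 0, d ≥ g, and let m₁, m₂ be natural numbers with m₁ + 2m₂ = 3d − 3(g−1) ≥ 0. Set N = 4 and J(ζ) := N²·ζ^{−1}·(1−ζ)^{−2}·(1+ζ)^{−1} for ζ ∈ {i, −i}. Then (−1)^{(g−1)+d} · (N/2) · (1 − 1/N)^g · Σ_{ζ ∈ {i,−i}} (1+ζ)^{m₁+d} · ζ^{m₂} · J(ζ)^{g−1} = 2^{2d − m₂ − (g−1)} · 3^g. -/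
open Complex

/-- for N = 4, the Vafa–Intriligator type formula
(−1)^{(g−1)+d} (N/2) (1−1/N)^g Σ_{ζ∈{i,−i}} (1+ζ)^{m₁+d} ζ^{m₂} J(ζ)^{g−1}
equals 2^{2d−m₂−(g−1)} 3^g, where J(ζ) = N² ζ⁻¹ (1−ζ)⁻² (1+ζ)⁻¹. -/
theorem stmt_10 (g d m₁ m₂ : ℕ) (hdg : g ≤ d)
    (hdim : (m₁ : ℤ) + 2 * (m₂ : ℤ) = 3 * (d : ℤ) - 3 * ((g : ℤ) - 1))
    (J : ℂ → ℂ)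
    (hJ : ∀ ζ : ℂ, J ζ = (4 : ℂ) ^ 2 * ζ⁻¹ * ((1 - ζ) ^ 2)⁻¹ * (1 + ζ)⁻¹) :
    (-1 : ℂ) ^ (((g : ℤ) - 1) + (d : ℤ)) * ((4 : ℂ) / 2) * (1 - 1 / 4) ^ g *
        ∑ ζ ∈ ({Complex.I, -Complex.I} : Finset ℂ),
          (1 + ζ) ^ (m₁ + d) * ζ ^ m₂ * (J ζ) ^ ((g : ℤ) - 1) =
      (2 : ℂ) ^ (2 * (d : ℤ) - (m₂ : ℤ) - ((g : ℤ) - 1)) * 3 ^ g := by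
  have hIsq : (I : ℂ) ^ 2 = -1 := Complex.I_sq
  have hI : (I : ℂ) ≠ 0 := I_ne_zero
  have hA : (1 : ℂ) + I ≠ 0 := by
    intro h
    have : (I : ℂ) = -1 := by linear_combination h
    have := congrArg Complex.im this
    simp at this
  have hB : (1 : ℂ) - I ≠ 0 := by
    intro h
    have : (I : ℂ) = 1 := by linear_combination -h
    have := congrArg Complex.im this
    simp at this
  have hIne : Complex.I ≠ -Complex.I := by
    intro h
    have := congrArg Complex.im h
    simp at this
    norm_num at this
  -- evaluate J
  have hJ1 : J I = 4 * (1 - I) := by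
    rw [hJ]
    rw [show ((1 : ℂ) - I) ^ 2 = -2 * I from by linear_combination Complex.I_sq]
    rw [Complex.inv_I]
    rw [inv_eq_of_mul_eq_one_right (show ((-2 : ℂ) * I) * (I / 2) = 1 from by
      linear_combination -Complex.I_sq)]
    rw [inv_eq_of_mul_eq_one_right (show ((1 : ℂ) + I) * ((1 - I) / 2) = 1 from by
      linear_combination (-1 / 2 : ℂ) * Complex.I_sq)]
    linear_combination (-4 + 4 * I) * Complex.I_sq
  have hJ2 : J (-I) = 4 * (1 + I) := by
    rw [hJ]
    rw [show ((1 : ℂ) - -I) ^ 2 = 2 * I from by linear_combination Complex.I_sq]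
    rw [inv_eq_of_mul_eq_one_right (show ((-I : ℂ)) * I = 1 from by
      linear_combination -Complex.I_sq)]
    rw [inv_eq_of_mul_eq_one_right (show ((2 : ℂ) * I) * (-I / 2) = 1 from by
      linear_combination -Complex.I_sq)]
    rw [inv_eq_of_mul_eq_one_right (show ((1 : ℂ) + -I) * ((1 + I) / 2) = 1 from by
      linear_combination (-1 / 2 : ℂ) * Complex.I_sq)]
    linear_combination (-4 - 4 * I) * Complex.I_sq
  rw [Finset.sum_pair hIne, hJ1, hJ2]
  set a : ℤ := (g : ℤ) - 1 with ha
  set k : ℤ := 2 * (d : ℤ) - 2 * a - (m₂ : ℤ) with hk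
  set c : ℤ := (d : ℤ) - a with hc
  have h2 : (2 : ℂ) ≠ 0 := two_ne_zero
  have hAB : ((1 : ℂ) + I) * (1 - I) = 2 := by linear_combination -Complex.I_sq
  have hexp : ((m₁ + d : ℕ) : ℤ) = 2 * k + a := by push_cast; omega
  have hmk : (m₂ : ℤ) + k = 2 * c := by omega
  -- term 1
  have t1 : ((1 : ℂ) + I) ^ (m₁ + d) * I ^ m₂ * (4 * (1 - I)) ^ a
      = 8 ^ a * 2 ^ k * (-1 : ℂ) ^ c := by
    have e1 : ((1 : ℂ) + I) ^ (m₁ + d) = (2 * I) ^ k * (1 + I) ^ a := by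
      rw [← zpow_natCast, hexp, zpow_add₀ hA, zpow_mul]
      rw [show ((1 : ℂ) + I) ^ (2 : ℤ) = 2 * I from by
        rw [zpow_two]; linear_combination Complex.I_sq]
    have e2 : ((1 : ℂ) + I) ^ a * (4 * (1 - I)) ^ a = 8 ^ a := by
      rw [← mul_zpow]
      congr 1
      linear_combination -4 * Complex.I_sq
    have e3 : (I : ℂ) ^ m₂ * I ^ k = (-1 : ℂ) ^ c := by
      rw [← zpow_natCast, ← zpow_add₀ hI, hmk, zpow_mul]
      rw [show (I : ℂ) ^ (2 : ℤ) = -1 from by rw [zpow_two]; linear_combination Complex.I_sq]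
    calc ((1 : ℂ) + I) ^ (m₁ + d) * I ^ m₂ * (4 * (1 - I)) ^ a
        = ((I : ℂ) ^ m₂ * I ^ k) * (2 ^ k) * (((1 : ℂ) + I) ^ a * (4 * (1 - I)) ^ a) := by
          rw [e1, mul_zpow]; ring
      _ = 8 ^ a * 2 ^ k * (-1 : ℂ) ^ c := by rw [e2, e3]; ring
  -- term 2
  have t2 : ((1 : ℂ) + -I) ^ (m₁ + d) * (-I) ^ m₂ * (4 * (1 + I)) ^ a
      = 8 ^ a * 2 ^ k * (-1 : ℂ) ^ c := by
    have hnI : (-I : ℂ) ≠ 0 := neg_ne_zero.mpr hI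
    have hBA : ((1 : ℂ) + -I) = 1 - I := by ring
    have e1 : ((1 : ℂ) + -I) ^ (m₁ + d) = (-2 * I) ^ k * (1 - I) ^ a := by
      rw [hBA, ← zpow_natCast, hexp, zpow_add₀ hB, zpow_mul]
      rw [show ((1 : ℂ) - I) ^ (2 : ℤ) = -2 * I from by
        rw [zpow_two]; linear_combination Complex.I_sq]
    have e2 : ((1 : ℂ) - I) ^ a * (4 * (1 + I)) ^ a = 8 ^ a := by
      rw [← mul_zpow]
      congr 1
      linear_combination -4 * Complex.I_sq
    have e3 : ((-I : ℂ)) ^ m₂ * (-I) ^ k = (-1 : ℂ) ^ c := by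
      rw [← zpow_natCast, ← zpow_add₀ hnI, hmk, zpow_mul]
      rw [show ((-I) : ℂ) ^ (2 : ℤ) = -1 from by rw [zpow_two]; linear_combination Complex.I_sq]
    have e4 : ((-2 : ℂ) * I) ^ k = 2 ^ k * (-I) ^ k := by
      rw [← mul_zpow]; congr 1; ring
    calc ((1 : ℂ) + -I) ^ (m₁ + d) * (-I) ^ m₂ * (4 * (1 + I)) ^ a
        = (((-I : ℂ)) ^ m₂ * (-I) ^ k) * (2 ^ k) * (((1 : ℂ) - I) ^ a * (4 * (1 + I)) ^ a) := by
          rw [e1, e4]; ring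
      _ = 8 ^ a * 2 ^ k * (-1 : ℂ) ^ c := by rw [e2, e3]; ring
  rw [t1, t2]
  -- now a purely scalar identity
  have hsign : (-1 : ℂ) ^ (a + (d : ℤ)) * (-1 : ℂ) ^ c = 1 := by
    rw [← zpow_add₀ (by norm_num : (-1 : ℂ) ≠ 0)]
    have : a + (d : ℤ) + c = 2 * d := by omega
    rw [this, zpow_mul]
    norm_num
  have h4 : (2 : ℂ) ^ (2 * (g : ℤ)) = 4 ^ g := by
    rw [zpow_mul, show (2 : ℂ) ^ (2 : ℤ) = 4 from by norm_num, zpow_natCast]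
  have h34 : ((1 : ℂ) - 1 / 4) ^ g = 3 ^ g * ((2 : ℂ) ^ (2 * (g : ℤ)))⁻¹ := by
    rw [show ((1 : ℂ) - 1 / 4) = 3 / 4 from by norm_num, div_pow, h4, div_eq_mul_inv]
  have h8 : (8 : ℂ) ^ a = 2 ^ (3 * a) := by
    rw [zpow_mul]; norm_num
  have hpow2 : ((2 : ℂ) ^ (2 * (g : ℤ)))⁻¹ * 2 ^ (3 * a) * 2 ^ k * 2 ^ (2 : ℤ)
      = (2 : ℂ) ^ (2 * (d : ℤ) - (m₂ : ℤ) - a) := by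
    rw [← zpow_neg, ← zpow_add₀ h2, ← zpow_add₀ h2, ← zpow_add₀ h2]
    congr 1
    omega
  calc (-1 : ℂ) ^ (a + (d : ℤ)) * ((4 : ℂ) / 2) * (1 - 1 / 4) ^ g *
        (8 ^ a * 2 ^ k * (-1 : ℂ) ^ c + 8 ^ a * 2 ^ k * (-1 : ℂ) ^ c)
      = ((-1 : ℂ) ^ (a + (d : ℤ)) * (-1 : ℂ) ^ c) * (3 ^ g *
        (((2 : ℂ) ^ (2 * (g : ℤ)))⁻¹ * 2 ^ (3 * a) * 2 ^ k * 2 ^ (2 : ℤ))) := by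
        rw [h34, h8]; norm_num; ring
    _ = (2 : ℂ) ^ (2 * (d : ℤ) - (m₂ : ℤ) - a) * 3 ^ g := by rw [hsign, hpow2]; ring
end

section
/- Let n ≥ 2 be an integer and q a nonzero complex number. The set of unordered pairs {z₁, z₂} of complex numbers satisfying z₁·z₂ ≠ 0, z₁ ≠ z₂, z₁ ≠ −z₂, and z₁^{2n} = z₂^{2n} = −q·(z₁ + z₂) has exactly (n−1)(2n−1) elements. -/
/-!
Writing `z₂ = ζ z₁`, the conditions say exactly that `ζ` is a `2n`-th root of unity other than
`±1` and that `z₁ ^ (2n - 1) = -q (1 + ζ)`, a nonzero number. Hence there are `(2n - 2)(2n - 1)`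
ordered solutions. They lie off the diagonal and are closed under swapping, so every unordered
pair is counted exactly twice.
-/

open Polynomial Finset

theorem Finset.card_image_pair_mul_two {α : Type*} [DecidableEq α] {s : Finset (α × α)}
    (hswap : ∀ p ∈ s, p.swap ∈ s) (hdiag : ∀ p ∈ s, p.1 ≠ p.2) :
    #(s.image fun p => ({p.1, p.2} : Finset α)) * 2 = #s := by
  set f : α × α → Finset α := fun p => {p.1, p.2}
  have hfiber : ∀ P ∈ s.image f, #{r ∈ s | f r = P} = 2 := by
    simp only [mem_image]
    rintro _ ⟨p, hp, rfl⟩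
    have hfiber_eq : {r ∈ s | f r = f p} = {p, p.swap} := by
      ext r
      simp only [f, mem_filter, mem_insert, mem_singleton, ← coe_inj, coe_pair,
        Set.pair_eq_pair_iff, Prod.ext_iff, Prod.fst_swap, Prod.snd_swap]
      constructor
      · exact fun h => h.2
      · rintro (h | h) <;> obtain ⟨r₁, r₂⟩ := r <;> obtain ⟨p₁, p₂⟩ := p <;>
          obtain ⟨rfl, rfl⟩ := h
        exacts [⟨hp, .inl ⟨rfl, rfl⟩⟩, ⟨hswap _ hp, .inr ⟨rfl, rfl⟩⟩]
    rw [hfiber_eq, card_pair]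
    exact fun h => hdiag p hp (congrArg Prod.fst h)
  rw [card_eq_sum_card_fiberwise fun p hp => mem_image_of_mem f hp, sum_congr rfl hfiber,
    sum_const, smul_eq_mul]

theorem IsPrimitiveRoot.card_nthRootsFinset_of_ne_zero {R : Type*} [CommRing R] [IsDomain R]
    {ζ : R} {n : ℕ} (h : IsPrimitiveRoot ζ n) {a : R} (ha : a ≠ 0) (hroot : ∃ α, α ^ n = a) :
    #(nthRootsFinset n a) = n := by
  classical
  rw [nthRootsFinset_def, Multiset.toFinset_card_of_nodup (h.nthRoots_nodup ha),
    h.card_nthRoots, if_pos hroot]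

theorem Complex.card_nthRootsFinset {n : ℕ} (hn : n ≠ 0) {a : ℂ} (ha : a ≠ 0) :
    #(nthRootsFinset n a) = n :=
  (Complex.isPrimitiveRoot_exp n hn).card_nthRootsFinset_of_ne_zero ha
    (IsAlgClosed.exists_pow_nat_eq a (Nat.pos_of_ne_zero hn))

section Field

variable {K : Type*} [Field K]

def IsSolution (m : ℕ) (q z₁ z₂ : K) : Prop :=
  z₁ * z₂ ≠ 0 ∧ z₁ ≠ z₂ ∧ z₁ ≠ -z₂ ∧ z₁ ^ m = -q * (z₁ + z₂) ∧ z₂ ^ m = -q * (z₁ + z₂)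

theorem IsSolution.swap {m : ℕ} {q z₁ z₂ : K} (h : IsSolution m q z₁ z₂) :
    IsSolution m q z₂ z₁ := by
  obtain ⟨h0, hne, hneg, h₁, h₂⟩ := h
  refine ⟨by rwa [mul_comm], hne.symm, fun h => hneg (by rw [h, neg_neg]), ?_, ?_⟩ <;>
    rwa [add_comm]

theorem isSolution_mul_iff {m : ℕ} (hm : 2 ≤ m) {q : K} (hq : q ≠ 0) {z ζ : K} :
    IsSolution m q z (ζ * z) ↔ ζ ^ m = 1 ∧ ζ ≠ 1 ∧ ζ ≠ -1 ∧ z ^ (m - 1) = -q * (1 + ζ) := by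
  have hpow : ∀ w : K, w ^ m = w ^ (m - 1) * w := fun w => by
    rw [← pow_succ, Nat.sub_add_cancel (by omega)]
  constructor
  · rintro ⟨h0, hne, hneg, h₁, h₂⟩
    have hz : z ≠ 0 := left_ne_zero_of_mul h0
    refine ⟨?_, fun h => hne (by rw [h, one_mul]), fun h => hneg (by rw [h]; ring), ?_⟩
    · rw [mul_pow, ← h₁] at h₂
      exact mul_right_cancel₀ (pow_ne_zero m hz) (h₂.trans (one_mul _).symm)
    · refine mul_right_cancel₀ hz ?_
      rw [← hpow, h₁]; ring
  · rintro ⟨hζm, hζ1, hζneg, hz⟩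
    have hc : -q * (1 + ζ) ≠ 0 :=
      mul_ne_zero (neg_ne_zero.2 hq) fun h => hζneg (eq_neg_of_add_eq_zero_right h)
    have hz0 : z ≠ 0 := by
      rintro rfl; exact hc (by rw [← hz, zero_pow (by omega)])
    have hζ0 : ζ ≠ 0 := by
      rintro rfl; exact zero_ne_one (by rw [← hζm, zero_pow (by omega)])
    have h₁ : z ^ m = -q * (z + ζ * z) := by rw [hpow, hz]; ring
    refine ⟨mul_ne_zero hz0 (mul_ne_zero hζ0 hz0), fun h => hζ1 ?_, fun h => hζneg ?_, h₁, ?_⟩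
    · exact (mul_eq_right₀ hz0).1 h.symm
    · exact mul_right_cancel₀ hz0 (by linear_combination h)
    · rw [mul_pow, hζm, one_mul, h₁]

theorem isSolution_iff_exists_mul {m : ℕ} (hm : 2 ≤ m) {q : K} (hq : q ≠ 0) {z₁ z₂ : K} :
    IsSolution m q z₁ z₂ ↔ ∃ ζ : K, (ζ ^ m = 1 ∧ ζ ≠ 1 ∧ ζ ≠ -1) ∧
      z₁ ^ (m - 1) = -q * (1 + ζ) ∧ z₂ = ζ * z₁ := by
  constructor
  · intro h
    have hz₁ : z₁ ≠ 0 := left_ne_zero_of_mul h.1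
    have hz₂ : z₂ = z₂ / z₁ * z₁ := (div_mul_cancel₀ z₂ hz₁).symm
    obtain ⟨hζm, hζ1, hζneg, hz⟩ := (isSolution_mul_iff hm hq).1 (hz₂ ▸ h)
    exact ⟨z₂ / z₁, ⟨hζm, hζ1, hζneg⟩, hz, hz₂⟩
  · rintro ⟨ζ, ⟨hζm, hζ1, hζneg⟩, hz, rfl⟩
    exact (isSolution_mul_iff hm hq).2 ⟨hζm, hζ1, hζneg, hz⟩

end Field

noncomputable def solutionFinset (n : ℕ) (q : ℂ) : Finset (ℂ × ℂ) :=
  (nthRootsFinset (2 * n) (1 : ℂ) \ {1, -1}).biUnion fun ζ =>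
    (nthRootsFinset (2 * n - 1) (-q * (1 + ζ))).image fun z => (z, ζ * z)

theorem mem_solutionFinset {n : ℕ} (hn : 0 < n) {q : ℂ} (hq : q ≠ 0) {p : ℂ × ℂ} :
    p ∈ solutionFinset n q ↔ IsSolution (2 * n) q p.1 p.2 := by
  rw [isSolution_iff_exists_mul (by omega) hq]
  simp only [solutionFinset, mem_biUnion, mem_sdiff, mem_nthRootsFinset (by omega : 0 < 2 * n),
    mem_nthRootsFinset (by omega : 0 < 2 * n - 1), mem_insert, mem_singleton, not_or, mem_image,
    Prod.ext_iff]
  constructor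
  · rintro ⟨ζ, hζ, z, hz, rfl, h₂⟩
    exact ⟨ζ, hζ, hz, h₂.symm⟩
  · rintro ⟨ζ, hζ, hz, h₂⟩
    exact ⟨ζ, hζ, p.1, hz, rfl, h₂.symm⟩

theorem card_solutionFinset {n : ℕ} (hn : 0 < n) {q : ℂ} (hq : q ≠ 0) :
    #(solutionFinset n q) = (2 * n - 2) * (2 * n - 1) := by
  have hc : ∀ ζ ∈ nthRootsFinset (2 * n) (1 : ℂ) \ {1, -1}, -q * (1 + ζ) ≠ 0 := by
    intro ζ hζ
    simp only [mem_sdiff, mem_insert, mem_singleton, not_or] at hζ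
    exact mul_ne_zero (neg_ne_zero.2 hq) fun h => hζ.2.2 (eq_neg_of_add_eq_zero_right h)
  have hsigns : {1, -1} ⊆ nthRootsFinset (2 * n) (1 : ℂ) := by
    simp [insert_subset_iff, mem_nthRootsFinset (by omega : 0 < 2 * n), pow_mul]
  have hfiber : ∀ ζ ∈ nthRootsFinset (2 * n) (1 : ℂ) \ {1, -1},
      #((nthRootsFinset (2 * n - 1) (-q * (1 + ζ))).image fun z => (z, ζ * z)) = 2 * n - 1 :=
    fun ζ hζ => (card_image_of_injective _ fun _ _ h => congrArg Prod.fst h).trans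
      (Complex.card_nthRootsFinset (by omega) (hc ζ hζ))
  rw [solutionFinset, card_biUnion]
  · rw [sum_congr rfl hfiber, sum_const, smul_eq_mul, card_sdiff_of_subset hsigns,
      Complex.card_nthRootsFinset (by omega) one_ne_zero, card_pair (by norm_num)]
  · intro ζ hζ ζ' _ hne
    simp only [Function.onFun, disjoint_left, mem_image]
    rintro _ ⟨z, hz, rfl⟩ ⟨z', -, hzz'⟩
    obtain ⟨rfl, hζz⟩ := Prod.ext_iff.1 hzz'
    have hz0 : z' ≠ 0 := by
      rintro rfl
      rw [mem_nthRootsFinset (by omega), zero_pow (by omega)] at hz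
      exact hc ζ hζ hz.symm
    exact hne (mul_right_cancel₀ hz0 hζz).symm

/-- for n ≥ 2 and q ≠ 0, the number of unordered pairs {z₁, z₂} of nonzero
complex numbers with z₁ ≠ ±z₂ and z₁^{2n} = z₂^{2n} = −q(z₁+z₂) is (n−1)(2n−1). -/
theorem stmt_16 (n : ℕ) (hn : 2 ≤ n) (q : ℂ) (hq : q ≠ 0) :
    Set.ncard {P : Finset ℂ | ∃ z₁ z₂ : ℂ, P = {z₁, z₂} ∧ z₁ * z₂ ≠ 0 ∧ z₁ ≠ z₂ ∧
        z₁ ≠ -z₂ ∧ z₁ ^ (2 * n) = -q * (z₁ + z₂) ∧ z₂ ^ (2 * n) = -q * (z₁ + z₂)} =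
      (n - 1) * (2 * n - 1) := by
  have hn0 : 0 < n := by omega
  have hhalf := card_image_pair_mul_two
    (fun p hp => (mem_solutionFinset hn0 hq).2 ((mem_solutionFinset hn0 hq).1 hp).swap)
    (fun p hp => ((mem_solutionFinset hn0 hq).1 hp).2.1)
  rw [card_solutionFinset hn0 hq, show 2 * n - 2 = (n - 1) * 2 by omega, mul_right_comm] at hhalf
  rw [← Nat.eq_of_mul_eq_mul_right two_pos hhalf, ← Set.ncard_coe_finset]
  congr 1
  ext P
  simp only [Set.mem_ofPred_eq, coe_image, Set.mem_image, mem_coe, mem_solutionFinset hn0 hq,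
    IsSolution, Prod.exists, eq_comm (a := P)]
  exact exists₂_congr fun _ _ => and_comm
end
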